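/- arXiv:1910.04063 — 3 statements merged into one kernel-verified Lean document; each statement's English description precedes it below -/
import Mathlib

section
/- Let S be a finite set and f : S → ℕ. The multinomial coefficient Nat.multinomial S f = (∑_{i∈S} f i)! / ∏_{i∈S} (f i)! is odd if and only if the values f i are pairwise bitwise disjoint in binary, i.e. Nat.land (f i) (f j) = 0 for all i ≠ j in S. (This is the criterion for the coefficient β_{R,S,X} in Milnor's multiplication formula for the mod 2 Steenrod algebra to be nonzero: the coefficient is nonzero if and only if the diagonal decomposition of each t_k is bitwise disjoint.) -/
/-!
Peeling off one index, `multinomial (cons a s) f = (f a + ∑ s f).choose (f a) * multinomial s f`.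
By Lucas's theorem at `p = 2`, `(x + y).choose x` is odd iff `x` and `y` share no binary digit.
When the values on `s` are pairwise disjoint, their sum is their bitwise or, so `f a` is disjoint
from the sum iff it is disjoint from each value; induction on `S` finishes.
-/

namespace Nat

theorem bit_add_bit_of_and_eq_false {c d : Bool} (h : (c && d) = false) (a b : ℕ) :
    bit c a + bit d b = bit (c || d) (a + b) := by
  cases c <;> cases d <;> simp_all [bit_val] <;> ring

theorem add_eq_lor_of_land_eq_zero {a b : ℕ} (h : a &&& b = 0) : a + b = a ||| b := by
  induction a using Nat.binaryRec generalizing b with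
  | zero => simp
  | bit c a ih =>
    cases b using Nat.bitCasesOn with
    | bit d b =>
    rw [land_bit, bit_eq_zero_iff] at h
    rw [bit_add_bit_of_and_eq_false h.2, ih h.1, lor_bit]

theorem land_sum_eq_zero_iff {ι : Type*} {s : Finset ι} {f : ι → ℕ}
    (hs : (s : Set ι).Pairwise fun i j => f i &&& f j = 0) (a : ℕ) :
    a &&& ∑ i ∈ s, f i = 0 ↔ ∀ i ∈ s, a &&& f i = 0 := by
  induction s using Finset.cons_induction generalizing a with
  | empty => simp
  | cons j s hj ih =>
    rw [Finset.coe_cons, Set.pairwise_insert] at hs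
    have hjs : f j &&& ∑ i ∈ s, f i = 0 :=
      (ih hs.1 (f j)).2 fun i hi => (hs.2 i hi (ne_of_mem_of_not_mem hi hj).symm).1
    rw [Finset.sum_cons, add_eq_lor_of_land_eq_zero hjs, and_or_distrib_left, or_eq_zero_iff,
      ih hs.1, Finset.forall_mem_cons]

theorem odd_choose_add_iff_land_eq_zero (a b : ℕ) : Odd ((a + b).choose a) ↔ a &&& b = 0 := by
  induction a using Nat.binaryRec generalizing b with
  | zero => simp
  | bit c a ih =>
    cases b using Nat.bitCasesOn with
    | bit d b =>
    have lucas : (bit c a + bit d b).choose (bit c a) ≡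
        ((bit c a + bit d b) % 2).choose (bit c a % 2) *
          ((bit c a + bit d b) / 2).choose (bit c a / 2) [MOD 2] :=
      Choose.choose_modEq_choose_mod_mul_choose_div_nat
    rw [Nat.odd_iff, lucas, land_bit, bit_eq_zero_iff, ← ih, Nat.odd_iff]
    cases hcd : c && d
    · rw [bit_add_bit_of_and_eq_false hcd, bit_mod_two, bit_mod_two, bit_div_two, bit_div_two]
      cases c <;> cases d <;> simp_all
    · -- a common last digit makes the first Lucas factor `choose 0 1 = 0`
      obtain ⟨rfl, rfl⟩ := Bool.and_eq_true_iff.mp hcd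
      have : bit true a + bit true b = bit false (a + b + 1) := by simp [bit_val]; ring
      rw [this, bit_mod_two, bit_mod_two]
      simp

end Nat

/-- The multinomial coefficient `(∑ i in S, f i)! / ∏ i in S, (f i)!` is odd if and only if
the values `f i`, `i ∈ S`, are pairwise bitwise disjoint in binary
(this is the criterion for the coefficient `β_{R,S,X}` in Milnor's multiplication formula
for the mod 2 Steenrod algebra to be nonzero). -/
theorem multinomial_odd_iff_pairwise_land_eq_zero {ι : Type*} (S : Finset ι) (f : ι → ℕ) :
    Odd (Nat.multinomial S f) ↔
      ∀ i ∈ S, ∀ j ∈ S, i ≠ j → Nat.land (f i) (f j) = 0 := by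
  show _ ↔ (S : Set ι).Pairwise fun i j => f i &&& f j = 0
  induction S using Finset.cons_induction with
  | empty => simp
  | cons a s ha ih =>
    have : Std.Symm fun i j => f i &&& f j = 0 := ⟨fun i j h => by rwa [Nat.land_comm]⟩
    rw [Nat.multinomial_cons, Nat.odd_mul, ih, Nat.odd_choose_add_iff_land_eq_zero,
      Finset.coe_cons, Set.pairwise_insert_of_symm, and_comm]
    refine and_congr_right fun hs => ?_
    rw [Nat.land_sum_eq_zero_iff hs]
    exact forall₂_congr fun b hb => (imp_iff_right (ne_of_mem_of_not_mem hb ha).symm).symm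
end

section
/- Let p : ℕ → ℕ be a profile function satisfying p(i) − j ≥ p(i+j) (truncated subtraction) for all i ≥ 1 and j ≥ 1, and let x be a Milnor matrix that is B-trivial for p, with row sums r_i and diagonal sums t_k. Then for every k ≥ 1 one has t_k ≡ r_k + x(0,k) (mod 2^{p(k)}). (This is the key congruence showing that B-trivial matrices compute the induced multiplication on the signature components E_R A; the hypothesis on p holds, e.g., for the profile p(i) = max(n+2−i, 0) of the subalgebra A(n) of the mod 2 Steenrod algebra.) -/
/-- The row sums `r_i = ∑_{j ≥ 0} 2^j · x (i, j)` of a finitely supported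
matrix `x : ℕ × ℕ →₀ ℕ`. -/
def milnorRowSum (x : ℕ × ℕ →₀ ℕ) (i : ℕ) : ℕ :=
  x.sum fun ij v => if ij.1 = i then 2 ^ ij.2 * v else 0

/-- The diagonal sums `t_k = ∑_{i + j = k} x (i, j)` of a finitely supported
matrix `x : ℕ × ℕ →₀ ℕ`. -/
def milnorDiagSum (x : ℕ × ℕ →₀ ℕ) (k : ℕ) : ℕ :=
  x.sum fun ij v => if ij.1 + ij.2 = k then v else 0

/-- A Milnor matrix (a finitely supported `x : ℕ × ℕ → ℕ` with `x (0,0) = 0`) is `B`-trivial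
for a profile function `p : ℕ → ℕ` if `2 ^ (p i - j) ∣ x (i, j)` whenever `i ≥ 1` and
`1 ≤ j ≤ p i`. -/
def IsBTrivial (p : ℕ → ℕ) (x : ℕ × ℕ →₀ ℕ) : Prop :=
  ∀ i j : ℕ, 1 ≤ i → 1 ≤ j → j ≤ p i → 2 ^ (p i - j) ∣ x (i, j)

/-!
The congruence holds entry by entry. An entry `x (k, j)` with `j ≥ 1` enters `r_k` as
`2 ^ j * x (k, j)`, which B-triviality makes divisible by `2 ^ p k`. An entry `x (i, j)` with
`i, j ≥ 1` and `i + j = k` enters `t_k` and is divisible by `2 ^ (p i - j)`, hence by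
`2 ^ p k` since `p k ≤ p i - j`. The remaining entries `x (k, 0)` and `x (0, k)` occur on both
sides.
-/

section IsBTrivial

variable {p : ℕ → ℕ} {x : ℕ × ℕ →₀ ℕ} {i j : ℕ}

theorem IsBTrivial.two_pow_dvd_two_pow_mul (htriv : IsBTrivial p x) (hi : 1 ≤ i) (hj : 1 ≤ j) :
    2 ^ p i ∣ 2 ^ j * x (i, j) := by
  by_cases hle : j ≤ p i
  · obtain ⟨c, hc⟩ := htriv i j hi hj hle
    exact ⟨c, by rw [hc, ← mul_assoc, ← pow_add, Nat.add_sub_cancel' hle]⟩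
  · exact dvd_mul_of_dvd_left (Nat.pow_dvd_pow 2 (by omega)) _

theorem IsBTrivial.two_pow_dvd_of_add (hp : ∀ i j : ℕ, 1 ≤ i → 1 ≤ j → p i - j ≥ p (i + j))
    (htriv : IsBTrivial p x) (hi : 1 ≤ i) (hj : 1 ≤ j) : 2 ^ p (i + j) ∣ x (i, j) := by
  have hpij := hp i j hi hj
  by_cases hle : j ≤ p i
  · exact (Nat.pow_dvd_pow 2 hpij).trans (htriv i j hi hj hle)
  · rw [show p (i + j) = 0 by omega, pow_zero]
    exact one_dvd _

theorem IsBTrivial.diagTerm_modEq_rowTerm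
    (hp : ∀ i j : ℕ, 1 ≤ i → 1 ≤ j → p i - j ≥ p (i + j)) (htriv : IsBTrivial p x)
    {k : ℕ} (hk : 1 ≤ k) (i j : ℕ) :
    (if i + j = k then x (i, j) else 0) ≡
      (if i = k then 2 ^ j * x (i, j) else 0) + (if (i, j) = (0, k) then x (i, j) else 0)
      [MOD 2 ^ p k] := by
  rcases Nat.eq_zero_or_pos i with rfl | hi
  · by_cases hj : j = k <;> simp [hj, (Nat.one_le_iff_ne_zero.mp hk).symm, Nat.ModEq.refl]
  have hne : (i, j) ≠ (0, k) := by simp [hi.ne']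
  rw [if_neg hne, add_zero]
  by_cases hik : i = k
  · subst hik
    rcases Nat.eq_zero_or_pos j with rfl | hj
    · simp [Nat.ModEq.refl]
    rw [if_neg (by omega), if_pos rfl]
    exact (Nat.modEq_zero_iff_dvd.mpr (htriv.two_pow_dvd_two_pow_mul hi hj)).symm
  rw [if_neg hik]
  by_cases hijk : i + j = k
  · rw [if_pos hijk]
    subst hijk
    exact Nat.modEq_zero_iff_dvd.mpr (htriv.two_pow_dvd_of_add hp hi (by omega))
  · rw [if_neg hijk]

end IsBTrivial

theorem diagSum_modCast_of_isBTrivial_general (p : ℕ → ℕ)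
    (hp : ∀ i j : ℕ, 1 ≤ i → 1 ≤ j → p i - j ≥ p (i + j))
    (x : ℕ × ℕ →₀ ℕ) (htriv : IsBTrivial p x)
    (k : ℕ) (hk : 1 ≤ k) :
    milnorDiagSum x k ≡ milnorRowSum x k + x (0, k) [MOD 2 ^ p k] := by
  classical
  rw [milnorDiagSum, milnorRowSum, ← x.sum_ite_self_eq' (0, k), ← Finsupp.sum_add]
  exact Nat.ModEq.sum fun ij _ => htriv.diagTerm_modEq_rowTerm hp hk ij.1 ij.2

/-- Let `p` be a profile function satisfying `p i - j ≥ p (i + j)` (truncated subtraction)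
for all `i, j ≥ 1`, and let `x` be a `B`-trivial Milnor matrix for `p`.  Then for every
`k ≥ 1` the diagonal sum satisfies `t_k ≡ r_k + x (0, k) (mod 2 ^ (p k))`. -/
theorem diagSum_modCast_of_isBTrivial (p : ℕ → ℕ)
    (hp : ∀ i j : ℕ, 1 ≤ i → 1 ≤ j → p i - j ≥ p (i + j))
    (x : ℕ × ℕ →₀ ℕ) (hx0 : x (0, 0) = 0) (htriv : IsBTrivial p x)
    (k : ℕ) (hk : 1 ≤ k) :
    milnorDiagSum x k ≡ milnorRowSum x k + x (0, k) [MOD 2 ^ p k] :=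
  diagSum_modCast_of_isBTrivial_general p hp x htriv k hk
end

section
/- Let p : ℕ → ℕ be a finitely supported profile function satisfying p(i+j) ≥ p(i) − j (truncated subtraction) for all i, j ≥ 1. Fix a linear order ⊑ on the set of bit positions {(s,t) ∈ ℕ × ℕ : t ≥ 1, s < p(t)} such that (s,t) ⊏ (s',t') whenever t < t', and order signatures by the induced lexicographic order: for finitely supported R, R' : ℕ → ℕ, set sig(R) < sig(R') if at the ⊑-greatest bit position (s,t) where the s-th binary digit of R(t) mod 2^{p(t)} and of R'(t) mod 2^{p(t)} differ, the digit of R'(t) mod 2^{p(t)} equals 1. Then: if a Milnor matrix x has disjoint diagonals and is not B-trivial for p, its row-sum sequence R = (r_i) and diagonal-sum sequence T = (t_k) satisfy sig(R) < sig(T). (This is the statement that all non-B-trivial terms in Milnor's product formula with odd coefficient have strictly larger B-signature.) -/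
/-- A Milnor matrix has disjoint diagonals if for every `k` the entries `x (i, j)` with
`i + j = k` are pairwise bitwise disjoint. -/
def HasDisjointDiagonals (x : ℕ × ℕ →₀ ℕ) : Prop :=
  ∀ i j i' j' : ℕ, i + j = i' + j' → (i, j) ≠ (i', j') →
    Nat.land (x (i, j)) (x (i', j')) = 0

theorem Set.Finite.exists_forall_lt_notMem {σ : Type*} [LinearOrder σ] {s : Set σ}
    (hs : s.Finite) (hne : s.Nonempty) : ∃ m ∈ s, ∀ a, m < a → a ∉ s := by
  obtain ⟨m, hm, hmax⟩ := s.exists_max_image id hs hne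
  exact ⟨m, hm, fun a ha has => (hmax a has).not_gt ha⟩

namespace Nat

theorem testBit_eq_false_of_land_eq_zero {a b s : ℕ} (h : a &&& b = 0) (hb : b.testBit s) :
    a.testBit s = false := by
  simpa [hb] using congrArg (testBit · s) h

theorem testBit_sum_of_pairwise_land_eq_zero {ι : Type*} {s : Finset ι} {f : ι → ℕ}
    (h : (s : Set ι).Pairwise fun a b => f a &&& f b = 0) (n : ℕ) :
    (∑ a ∈ s, f a).testBit n ↔ ∃ a ∈ s, (f a).testBit n := by
  induction s using Finset.cons_induction generalizing n with
  | empty => simp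
  | cons a s ha ih =>
    have ih := ih (h.mono (by simp))
    have hdisj : f a &&& ∑ b ∈ s, f b = 0 := by
      refine eq_of_testBit_eq fun k => ?_
      rw [testBit_land, zero_testBit, Bool.and_eq_false_iff, Bool.eq_false_iff]
      refine or_iff_not_imp_right.2 fun hk => ?_
      obtain ⟨b, hb, hbk⟩ := (ih k).1 (by simpa using hk)
      have hne : a ≠ b := fun hab => ha (hab ▸ hb)
      simp [testBit_eq_false_of_land_eq_zero (h (by simp) (by simp [hb]) hne) hbk]
    rw [Finset.sum_cons, add_eq_lor_of_land_eq_zero hdisj, testBit_lor, Bool.or_eq_true, ih]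
    simp only [Finset.mem_cons, or_and_right, exists_or, exists_eq_left]

theorem exists_testBit_of_not_two_pow_dvd {m v : ℕ} (h : ¬ 2 ^ m ∣ v) :
    ∃ s < m, v.testBit s := by
  obtain ⟨s, hs⟩ := exists_testBit_of_ne_zero (mt dvd_of_mod_eq_zero h)
  rw [testBit_mod_two_pow, Bool.and_eq_true, decide_eq_true_eq] at hs
  exact ⟨s, hs⟩

theorem two_pow_dvd_of_forall_testBit_eq_false {m v : ℕ} (h : ∀ s < m, v.testBit s = false) :
    2 ^ m ∣ v := by
  by_contra hdvd
  obtain ⟨s, hs, hbit⟩ := exists_testBit_of_not_two_pow_dvd hdvd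
  simp [h s hs] at hbit

end Nat

theorem exists_forall_mem_support_add_le (x : ℕ × ℕ →₀ ℕ) :
    ∃ N, ∀ ij ∈ x.support, ij.1 + ij.2 ≤ N :=
  ⟨_, fun _ => Finset.le_sup (f := fun ij : ℕ × ℕ => ij.1 + ij.2)⟩

section Milnor

variable {x : ℕ × ℕ →₀ ℕ}

theorem milnorRowSum_eq_zero_of_lt {N t : ℕ} (hN : ∀ ij ∈ x.support, ij.1 + ij.2 ≤ N)
    (ht : N < t) : milnorRowSum x t = 0 :=
  Finset.sum_eq_zero fun ij hij => if_neg (by have := hN ij hij; omega)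

theorem milnorDiagSum_eq_zero_of_lt {N k : ℕ} (hN : ∀ ij ∈ x.support, ij.1 + ij.2 ≤ N)
    (hk : N < k) : milnorDiagSum x k = 0 :=
  Finset.sum_eq_zero fun ij hij => if_neg (by have := hN ij hij; omega)

theorem milnorRowSum_modEq {i m : ℕ} (h : ∀ j, 1 ≤ j → 2 ^ (m - j) ∣ x (i, j)) :
    milnorRowSum x i ≡ x (i, 0) [MOD 2 ^ m] := by
  classical
  calc milnorRowSum x i ≡ x.sum (fun ij v => if ij = (i, 0) then v else 0) [MOD 2 ^ m] := by
        refine Nat.ModEq.sum fun ⟨i', j⟩ _ => ?_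
        rcases eq_or_ne i' i with rfl | hi
        · rcases Nat.eq_zero_or_pos j with rfl | hj
          · simp [Nat.ModEq]
          · have hdvd : 2 ^ m ∣ 2 ^ j * x (i', j) :=
              (pow_dvd_pow 2 (by omega : m ≤ j + (m - j))).trans
                (pow_add 2 j (m - j) ▸ mul_dvd_mul_left _ (h j hj))
            simpa [hj.ne'] using (Nat.modEq_zero_iff_dvd.2 hdvd)
        · simp [hi, Nat.ModEq.refl]
    _ = x (i, 0) := Finsupp.sum_ite_self_eq' x (i, 0)

theorem testBit_milnorDiagSum (hdisj : HasDisjointDiagonals x) (k s : ℕ) :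
    (milnorDiagSum x k).testBit s ↔ ∃ i j, i + j = k ∧ (x (i, j)).testBit s := by
  classical
  have hsum : milnorDiagSum x k = ∑ ij ∈ x.support with ij.1 + ij.2 = k, x ij :=
    (Finset.sum_filter _ _).symm
  rw [hsum, Nat.testBit_sum_of_pairwise_land_eq_zero]
  · constructor
    · rintro ⟨⟨i, j⟩, hij, hbit⟩
      exact ⟨i, j, (Finset.mem_filter.1 hij).2, hbit⟩
    · rintro ⟨i, j, hij, hbit⟩
      refine ⟨(i, j), Finset.mem_filter.2 ⟨Finsupp.mem_support_iff.2 fun h0 => ?_, hij⟩, hbit⟩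
      simp [h0] at hbit
  · rintro ⟨i, j⟩ hij ⟨i', j'⟩ hij' hne
    rw [Finset.coe_filter] at hij hij'
    exact hdisj i j i' j' (hij.2.trans hij'.2.symm) hne

end Milnor

abbrev BitPos (p : ℕ → ℕ) : Type := {st : ℕ × ℕ // 1 ≤ st.2 ∧ st.1 < p st.2}

def signatureBit (p : ℕ → ℕ) (S : ℕ → ℕ) (st : BitPos p) : Bool :=
  (S st.1.2 % 2 ^ p st.1.2).testBit st.1.1

theorem signatureBit_eq_testBit (p S : ℕ → ℕ) (st : BitPos p) :
    signatureBit p S st = (S st.1.2).testBit st.1.1 := by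
  simp [signatureBit, Nat.testBit_mod_two_pow, st.2.2]

theorem signatureBit_milnorDiagSum {p : ℕ → ℕ} {x : ℕ × ℕ →₀ ℕ} (hdisj : HasDisjointDiagonals x)
    (st : BitPos p) :
    signatureBit p (milnorDiagSum x) st ↔ ∃ i j, i + j = st.1.2 ∧ (x (i, j)).testBit st.1.1 := by
  rw [signatureBit_eq_testBit, testBit_milnorDiagSum hdisj]

theorem finite_setOf_bitPos_le (p : ℕ → ℕ) (N : ℕ) : {st : BitPos p | st.1.2 ≤ N}.Finite := by
  have hfin : {st : ℕ × ℕ | st.2 ≤ N ∧ st.1 < p st.2}.Finite :=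
    ((Set.finite_Iic N).biUnion fun t _ =>
      (Set.finite_Iio (p t)).prod (Set.finite_singleton t)).subset
        fun st hst => Set.mem_biUnion hst.1 ⟨hst.2, rfl⟩
  exact (hfin.preimage Subtype.val_injective.injOn).subset fun st hst => ⟨hst, st.2.2⟩

theorem finite_signatureDiff {p S S' : ℕ → ℕ} {N : ℕ} (hS : ∀ t, N < t → S t = 0)
    (hS' : ∀ t, N < t → S' t = 0) :
    {st : BitPos p | signatureBit p S st ≠ signatureBit p S' st}.Finite :=
  (finite_setOf_bitPos_le p N).subset fun st hst => show st.1.2 ≤ N from le_of_not_gt fun ht =>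
    hst (by simp [signatureBit, hS _ ht, hS' _ ht])

def bDefects (p : ℕ → ℕ) (x : ℕ × ℕ →₀ ℕ) : Set (BitPos p) :=
  {st | ∃ i j, 1 ≤ i ∧ 1 ≤ j ∧ i + j = st.1.2 ∧ st.1.1 < p i - j ∧ (x (i, j)).testBit st.1.1}

section Defects

variable {p : ℕ → ℕ} {x : ℕ × ℕ →₀ ℕ}

theorem bDefects_nonempty (hp : ∀ i j : ℕ, 1 ≤ i → 1 ≤ j → p (i + j) ≥ p i - j)
    (hnt : ¬ IsBTrivial p x) : (bDefects p x).Nonempty := by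
  simp only [IsBTrivial, not_forall] at hnt
  obtain ⟨i, j, hi, hj, -, hdvd⟩ := hnt
  obtain ⟨s, hs, hbit⟩ := Nat.exists_testBit_of_not_two_pow_dvd hdvd
  have := hp i j hi hj
  exact ⟨⟨(s, i + j), show 1 ≤ i + j by omega, show s < p (i + j) by omega⟩,
    i, j, hi, hj, rfl, hs, hbit⟩

theorem finite_bDefects {N : ℕ} (hN : ∀ ij ∈ x.support, ij.1 + ij.2 ≤ N) :
    (bDefects p x).Finite :=
  (finite_setOf_bitPos_le p N).subset fun st ⟨i, j, _, _, hij, _, hbit⟩ =>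
    show st.1.2 ≤ N from hij ▸ hN (i, j) (Finsupp.mem_support_iff.2 fun h0 => by simp [h0] at hbit)

theorem two_pow_dvd_of_forall_bDefects_le (hp : ∀ i j : ℕ, 1 ≤ i → 1 ≤ j → p (i + j) ≥ p i - j)
    {k : ℕ} (hdef : ∀ d ∈ bDefects p x, d.1.2 ≤ k) {i j : ℕ} (hi : 1 ≤ i) (hj : 1 ≤ j)
    (hk : k < i + j) : 2 ^ (p i - j) ∣ x (i, j) := by
  refine Nat.two_pow_dvd_of_forall_testBit_eq_false fun s hs => Bool.eq_false_iff.2 fun hbit => ?_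
  have := hp i j hi hj
  have : i + j ≤ k := hdef ⟨(s, i + j), show 1 ≤ i + j by omega, show s < p (i + j) by omega⟩
    ⟨i, j, hi, hj, rfl, hs, hbit⟩
  omega

theorem signatureBit_milnorRowSum_of_forall_bDefects_le
    (hp : ∀ i j : ℕ, 1 ≤ i → 1 ≤ j → p (i + j) ≥ p i - j) {k : ℕ}
    (hdef : ∀ d ∈ bDefects p x, d.1.2 ≤ k) (st : BitPos p) (hk : k ≤ st.1.2) :
    signatureBit p (milnorRowSum x) st = (x (st.1.2, 0)).testBit st.1.1 := by
  have hmod := milnorRowSum_modEq (x := x) (i := st.1.2) (m := p st.1.2) fun j hj =>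
    two_pow_dvd_of_forall_bDefects_le hp hdef st.2.1 hj (by omega)
  rw [signatureBit, hmod, Nat.testBit_mod_two_pow, decide_eq_true st.2.2, Bool.true_and]

theorem signatureBit_milnorRowSum_imp_milnorDiagSum
    (hp : ∀ i j : ℕ, 1 ≤ i → 1 ≤ j → p (i + j) ≥ p i - j) (hdisj : HasDisjointDiagonals x)
    {k : ℕ} (hdef : ∀ d ∈ bDefects p x, d.1.2 ≤ k) (st : BitPos p) (hk : k ≤ st.1.2)
    (hR : signatureBit p (milnorRowSum x) st) : signatureBit p (milnorDiagSum x) st :=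
  (signatureBit_milnorDiagSum hdisj st).2
    ⟨st.1.2, 0, rfl, signatureBit_milnorRowSum_of_forall_bDefects_le hp hdef st hk ▸ hR⟩

theorem signatureBit_eq_false_and_eq_true_of_mem_bDefects
    (hp : ∀ i j : ℕ, 1 ≤ i → 1 ≤ j → p (i + j) ≥ p i - j) (hdisj : HasDisjointDiagonals x)
    {K : BitPos p} (hK : K ∈ bDefects p x)
    (hKmax : ∀ d ∈ bDefects p x, d.1.2 ≤ K.1.2) :
    signatureBit p (milnorRowSum x) K = false ∧ signatureBit p (milnorDiagSum x) K = true := by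
  obtain ⟨i, j, -, hj, hij, -, hbit⟩ := hK
  have hne : (K.1.2, 0) ≠ (i, j) := fun h => by simp [Prod.ext_iff] at h; omega
  rw [signatureBit_milnorRowSum_of_forall_bDefects_le hp hKmax K le_rfl]
  exact ⟨Nat.testBit_eq_false_of_land_eq_zero (hdisj _ _ _ _ (by omega) hne) hbit,
    (signatureBit_milnorDiagSum hdisj K).2 ⟨i, j, hij, hbit⟩⟩

end Defects

theorem signature_lt_of_not_isBTrivial_general (p : ℕ → ℕ)
    (hp : ∀ i j : ℕ, 1 ≤ i → 1 ≤ j → p (i + j) ≥ p i - j)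
    (ord : LinearOrder {st : ℕ × ℕ // 1 ≤ st.2 ∧ st.1 < p st.2})
    (hord : ∀ a b : {st : ℕ × ℕ // 1 ≤ st.2 ∧ st.1 < p st.2},
      a.1.2 < b.1.2 → ord.lt a b)
    (x : ℕ × ℕ →₀ ℕ)
    (hdisj : HasDisjointDiagonals x) (hnt : ¬ IsBTrivial p x) :
    ∃ st : {st : ℕ × ℕ // 1 ≤ st.2 ∧ st.1 < p st.2},
      Nat.testBit (milnorRowSum x st.1.2 % 2 ^ p st.1.2) st.1.1 = false ∧
      Nat.testBit (milnorDiagSum x st.1.2 % 2 ^ p st.1.2) st.1.1 = true ∧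
      ∀ st' : {st : ℕ × ℕ // 1 ≤ st.2 ∧ st.1 < p st.2}, ord.lt st st' →
        Nat.testBit (milnorRowSum x st'.1.2 % 2 ^ p st'.1.2) st'.1.1 =
          Nat.testBit (milnorDiagSum x st'.1.2 % 2 ^ p st'.1.2) st'.1.1 := by
  obtain ⟨N, hN⟩ := exists_forall_mem_support_add_le x
  -- `ord` must be passed by hand: the subtype already carries the order induced from `ℕ × ℕ`.
  obtain ⟨K, hK, hKmax⟩ := @Set.Finite.exists_forall_lt_notMem _ ord _
    (finite_bDefects hN) (bDefects_nonempty hp hnt)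
  have hdef : ∀ d ∈ bDefects p x, d.1.2 ≤ K.1.2 :=
    fun d hd => le_of_not_gt fun h => hKmax d (hord K d h) hd
  obtain ⟨hRK, hTK⟩ := signatureBit_eq_false_and_eq_true_of_mem_bDefects hp hdisj hK hdef
  have hKdiff : signatureBit p (milnorRowSum x) K ≠ signatureBit p (milnorDiagSum x) K := by
    rw [hRK, hTK]; decide
  obtain ⟨M, hM, hMmax⟩ := @Set.Finite.exists_forall_lt_notMem _ ord _
    (finite_signatureDiff (fun _ => milnorRowSum_eq_zero_of_lt hN)
      (fun _ => milnorDiagSum_eq_zero_of_lt hN))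
    ⟨K, hKdiff⟩
  have hKM : K.1.2 ≤ M.1.2 := le_of_not_gt fun h => hMmax K (hord M K h) hKdiff
  have hRT := signatureBit_milnorRowSum_imp_milnorDiagSum hp hdisj hdef M hKM
  have hR : signatureBit p (milnorRowSum x) M = false :=
    Bool.eq_false_iff.2 fun h => hM (h.trans (hRT h).symm)
  refine ⟨M, hR, ?_, fun st hst => not_not.1 fun hne => hMmax st hst hne⟩
  exact Bool.ne_false_iff.1 fun h => hM (hR.trans h.symm)

/-- Let `p` be a finitely supported profile function with `p (i + j) ≥ p i - j` for
`i, j ≥ 1`, and fix a linear order `ord` on the set of bit positions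
`{(s, t) : 1 ≤ t, s < p t}` such that `(s, t) < (s', t')` whenever `t < t'`.
If a Milnor matrix `x` has disjoint diagonals and is not `B`-trivial for `p`, then its
row-sum sequence `R` is strictly smaller than its diagonal-sum sequence `T` in the induced
lexicographic order of `B`-signatures: at the greatest bit position where the binary digits of
`R t mod 2 ^ (p t)` and `T t mod 2 ^ (p t)` differ, the digit of `T t mod 2 ^ (p t)` is `1`
(and that of `R t mod 2 ^ (p t)` is `0`). -/
theorem signature_lt_of_not_isBTrivial (p : ℕ → ℕ) (hpfin : (Function.support p).Finite)
    (hp : ∀ i j : ℕ, 1 ≤ i → 1 ≤ j → p (i + j) ≥ p i - j)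
    (ord : LinearOrder {st : ℕ × ℕ // 1 ≤ st.2 ∧ st.1 < p st.2})
    (hord : ∀ a b : {st : ℕ × ℕ // 1 ≤ st.2 ∧ st.1 < p st.2},
      a.1.2 < b.1.2 → ord.lt a b)
    (x : ℕ × ℕ →₀ ℕ) (hx0 : x (0, 0) = 0)
    (hdisj : HasDisjointDiagonals x) (hnt : ¬ IsBTrivial p x) :
    ∃ st : {st : ℕ × ℕ // 1 ≤ st.2 ∧ st.1 < p st.2},
      Nat.testBit (milnorRowSum x st.1.2 % 2 ^ p st.1.2) st.1.1 = false ∧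
      Nat.testBit (milnorDiagSum x st.1.2 % 2 ^ p st.1.2) st.1.1 = true ∧
      ∀ st' : {st : ℕ × ℕ // 1 ≤ st.2 ∧ st.1 < p st.2}, ord.lt st st' →
        Nat.testBit (milnorRowSum x st'.1.2 % 2 ^ p st'.1.2) st'.1.1 =
          Nat.testBit (milnorDiagSum x st'.1.2 % 2 ^ p st'.1.2) st'.1.1 :=
  signature_lt_of_not_isBTrivial_general p hp ord hord x hdisj hnt
end
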